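/- In the queueing construction, for every ε' ∈ (0,1) there exists M₀ such that for all integers M ≥ M₀, all i with 2 ≤ i ≤ N and all j with 0 ≤ j ≤ ε'·M, the jump-to-c condition holds at (i,μ_j): Σ_{(i',μ_{j'}) ≠ (i,μ_j)} |A^{i'}(μ_j|μ_{j'})·Q^{μ_j}(i|i')|·g(i',μ_{j'}) ≥ Σ_{(i',μ_{j'}) ≠ (i,μ_j)} |A^i(μ_{j'}|μ_j)·Q^{μ_{j'}}(i'|i)|·g(i,μ_j). Consequently, under the minimal choice of τ_ε, jumps from (i,μ_j) to the transition state c are possible for all such (i,j). -/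

import Mathlib

noncomputable section

/-- `μ_j = 1/2 + j/M`. -/
def μval (M j : ℕ) : ℝ := 1 / 2 + (j : ℝ) / (M : ℝ)

/-- The queueing generator `Q^μ` on `X = {0,…,N}`: `Q^μ(i+1|i) = 1`, `Q^μ(i−1|i) = μ`,
diagonal `−1` at `0`, `−μ` at `N`, `−(1+μ)` in between, other entries `0`;
`Qq N μ i' i = Q^μ(i'|i)`. -/
def Qq (N : ℕ) (μ : ℝ) (i' i : Fin (N + 1)) : ℝ :=
  if i'.val = i.val + 1 then 1
  else if i'.val + 1 = i.val then μ
  else if i' = i then -((if i.val < N then (1 : ℝ) else 0) + (if 0 < i.val then μ else 0))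
  else 0

/-- The upward jump rate of the environment chain `A^i`: `i` for `i ≥ 1`, `1/M²` for `i = 0`. -/
def upRate (M i : ℕ) : ℝ := if i = 0 then ((M : ℝ) ^ 2)⁻¹ else (i : ℝ)

/-- The environment generator `A^i` on `Z = {μ_0,…,μ_M}` (indexed by `j`):
`A^i(μ_{j+1}|μ_j) = upRate M i`, `A^i(μ_{j−1}|μ_j) = 1`, diagonal making row sums zero,
other entries `0`; `Aq M i j' j = A^i(μ_{j'}|μ_j)`. -/
def Aq (M i : ℕ) (j' j : Fin (M + 1)) : ℝ :=
  if j'.val = j.val + 1 then upRate M i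
  else if j'.val + 1 = j.val then 1
  else if j' = j then -((if j.val < M then upRate M i else 0) + (if 0 < j.val then (1 : ℝ) else 0))
  else 0

/-- `η(μ) = Σ_{i=0}^{N} μ^{−i}`. -/
def ηq (N : ℕ) (μ : ℝ) : ℝ := ∑ k ∈ Finset.range (N + 1), μ⁻¹ ^ k

/-- `m^μ(i) = μ^{−i}/η(μ)`. -/
def mq (N : ℕ) (μ : ℝ) (i : Fin (N + 1)) : ℝ := μ⁻¹ ^ i.val / ηq N μ

/-- `σ(i) = Σ_{j=0}^{M} i^j` for `i ≥ 1`, and `σ(0) = Σ_{j=0}^{M} M^{−2j}`. -/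
def σq (M i : ℕ) : ℝ := ∑ j ∈ Finset.range (M + 1), upRate M i ^ j

/-- `ν^i(μ_j) = i^j/σ(i)` for `i ≥ 1`, and `ν^0(μ_j) = M^{−2j}/σ(0)`. -/
def νq (M i : ℕ) (j : Fin (M + 1)) : ℝ := upRate M i ^ j.val / σq M i

/-- The product measure `g(i,μ_j) = m^{μ_j}(i)·ν^i(μ_j)` on the natural space. -/
def gq (N M : ℕ) (p : Fin (N + 1) × Fin (M + 1)) : ℝ :=
  mq N (μval M p.2.val) p.1 * νq M p.1.val p.2

/-- The minimal choice `τ_ε(i,μ)`: the maximum of the two ratios in (12). -/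
def τq (N M : ℕ) (p : Fin (N + 1) × Fin (M + 1)) : ℝ :=
  max
    ((∑ s ∈ Finset.univ.erase p,
        |Aq M s.1.val p.2 s.2 * Qq N (μval M p.2.val) p.1 s.1| * gq N M s) /
      (Aq M p.1.val p.2 p.2 * Qq N (μval M p.2.val) p.1 p.1 * gq N M p))
    ((∑ s ∈ Finset.univ.erase p,
        |Aq M p.1.val s.2 p.2 * Qq N (μval M s.2.val) s.1 p.1|) /
      (Aq M p.1.val p.2 p.2 * Qq N (μval M p.2.val) p.1 p.1))

/-- The natural-space part of the combined generator:
`R_ε(i',μ'|i,μ) = |A^i(μ'|μ)·Q^{μ'}(i'|i)|` off the diagonal and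
`R_ε(i,μ|i,μ) = −τ_ε(i,μ)·|A^i(μ|μ)·Q^μ(i|i)|`; `Rnat N M s p = R_ε(s|p)`. -/
def Rnat (N M : ℕ) (s p : Fin (N + 1) × Fin (M + 1)) : ℝ :=
  if s = p then -τq N M p * |Aq M p.1.val p.2 p.2 * Qq N (μval M p.2.val) p.1 p.1|
  else |Aq M p.1.val s.2 p.2 * Qq N (μval M s.2.val) s.1 p.1|

/-- Rate into the maintenance state: `R_ε(c_i|(i,μ)) = −Σ_{(i',μ')} R_ε(i',μ'|(i,μ))`. -/
def RcIn (N M : ℕ) (p : Fin (N + 1) × Fin (M + 1)) : ℝ :=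
  -∑ s : Fin (N + 1) × Fin (M + 1), Rnat N M s p

/-- Rate out of the maintenance state:
`R_ε((i,μ)|c_i) = −(1/ε)·Σ_{(i',μ')} R_ε((i,μ)|(i',μ'))·g(i',μ')`. -/
def RcOut (N M : ℕ) (ε : ℝ) (p : Fin (N + 1) × Fin (M + 1)) : ℝ :=
  -(1 / ε) * ∑ s : Fin (N + 1) × Fin (M + 1), Rnat N M p s * gq N M s

/-- The recursively defined pair `(V_r^{(j)}, V_c^{(j)})` with `j = N − t` (fuel `t`). -/
def Vrc (N M : ℕ) (ε : ℝ) : ℕ → ℝ × ℝ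
  | 0 =>
      (∑ μ : Fin (M + 1),
          RcIn N M (⟨N, Nat.lt_succ_self N⟩, μ) * gq N M (⟨N, Nat.lt_succ_self N⟩, μ),
        ε * ∑ μ : Fin (M + 1), RcOut N M ε (⟨N, Nat.lt_succ_self N⟩, μ))
  | t + 1 =>
      let v := Vrc N M ε t
      let j : Fin (N + 1) := ⟨N - (t + 1), by omega⟩
      ((∑ μ : Fin (M + 1), RcIn N M (j, μ) * gq N M (j, μ)) + max (v.1 - v.2) 0,
        ε * (∑ μ : Fin (M + 1), RcOut N M ε (j, μ)) + max (v.2 - v.1) 0)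

/-- `(V_r^{(j)}, V_c^{(j)})` for `1 ≤ j ≤ N`. -/
def Vj (N M : ℕ) (ε : ℝ) (j : ℕ) : ℝ × ℝ := Vrc N M ε (N - j)

/-- The combined generator `R_ε` of the multiple-maintenance-state construction on
`Ŷ = (X×Z) ⊕ {c_0,…,c_N}`; `Rhat N M ε s p = R_ε(s|p)`. -/
def Rhat (N M : ℕ) (ε : ℝ) :
    ((Fin (N + 1) × Fin (M + 1)) ⊕ Fin (N + 1)) →
      ((Fin (N + 1) × Fin (M + 1)) ⊕ Fin (N + 1)) → ℝ
  | Sum.inl s, Sum.inl p => Rnat N M s p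
  | Sum.inr a, Sum.inl p => if a = p.1 then RcIn N M p else 0
  | Sum.inl s, Sum.inr a => if a = s.1 then RcOut N M ε s else 0
  | Sum.inr a, Sum.inr b =>
      if a = b then
        if b.val = 0 then
          -((∑ μ : Fin (M + 1), RcOut N M ε (b, μ)) +
              max ((Vj N M ε 1).2 - (Vj N M ε 1).1) 0 / ε)
        else -(max (Vj N M ε b.val).1 (Vj N M ε b.val).2) / ε
      else if a.val = b.val + 1 then
        max ((Vj N M ε (b.val + 1)).2 - (Vj N M ε (b.val + 1)).1) 0 / ε
      else if a.val + 1 = b.val then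
        max ((Vj N M ε b.val).1 - (Vj N M ε b.val).2) 0 / ε
      else 0

/-- The target stationary measure on `Ŷ`: `g` on the natural space, `ε` on each `c_i`. -/
def ghat (N M : ℕ) (ε : ℝ) : ((Fin (N + 1) × Fin (M + 1)) ⊕ Fin (N + 1)) → ℝ :=
  Sum.elim (gq N M) fun _ => ε

/-!
The inflow into `(i, μ_j)` from `(i - 1, μ_j)` alone has rate `|A^{i-1}(μ_j|μ_j)| · Q(i|i-1) ≥ 1`
(the diagonal entry of `A` is counted), while the total exit rate from `(i, μ_j)` is at most
`K = 15/2 (N + 1)²`. So it suffices that `K · g(i, μ_j) ≤ g(i - 1, μ_j)`. From `i^M ≤ σ(i)` and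
`σ(i - 1) ≤ (M + 1) (i - 1)^M` the ratio `g(i, μ_j) / g(i - 1, μ_j)` is at most
`2 (M + 1) ((i - 1) / i)^(M - j) ≤ 2 (M + 1) (N / (N + 1))^((1 - ε') M)`, which tends to `0`.
The jump-to-c condition is exactly the statement that the first ratio defining `τ_ε`
dominates the second.
-/

open Finset Filter Topology

section Rates

lemma half_le_μval (M j : ℕ) : 1 / 2 ≤ μval M j := by
  unfold μval
  have : (0 : ℝ) ≤ j / M := by positivity
  linarith

lemma μval_pos (M j : ℕ) : 0 < μval M j :=
  lt_of_lt_of_le (by norm_num) (half_le_μval M j)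

lemma μval_le_three_halves {M j : ℕ} (hj : j ≤ M) : μval M j ≤ 3 / 2 := by
  unfold μval
  have : (j : ℝ) / M ≤ 1 := div_le_one_of_le₀ (by exact_mod_cast hj) (Nat.cast_nonneg M)
  linarith

lemma inv_μval_le_two (M j : ℕ) : (μval M j)⁻¹ ≤ 2 := by
  rw [inv_le_comm₀ (μval_pos M j) two_pos]
  exact half_le_μval M j |>.trans_eq' (by norm_num)

lemma upRate_of_ne_zero (M : ℕ) {i : ℕ} (hi : i ≠ 0) : upRate M i = i := if_neg hi

lemma upRate_nonneg (M i : ℕ) : 0 ≤ upRate M i := by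
  unfold upRate; split_ifs <;> positivity

lemma upRate_pos {M : ℕ} (hM : 0 < M) (i : ℕ) : 0 < upRate M i := by
  unfold upRate
  split_ifs with hi
  · positivity
  · exact_mod_cast Nat.pos_of_ne_zero hi

lemma abs_Aq_le (M i : ℕ) (j' j : Fin (M + 1)) : |Aq M i j' j| ≤ upRate M i + 1 := by
  have := upRate_nonneg M i
  unfold Aq
  split_ifs <;> rw [abs_le] <;> constructor <;> linarith

lemma Aq_eq_zero_of_not_adjacent (M i : ℕ) {j' j : Fin (M + 1)}
    (h : ¬(j'.val ≤ j.val + 1 ∧ j.val ≤ j'.val + 1)) : Aq M i j' j = 0 := by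
  have hne : j' ≠ j := by rintro rfl; omega
  unfold Aq
  rw [if_neg (by omega), if_neg (by omega), if_neg hne]

lemma Aq_self_le_neg_one {M i : ℕ} (hM : 0 < M) (hi : i ≠ 0) (j : Fin (M + 1)) :
    Aq M i j j ≤ -1 := by
  have hup : (1 : ℝ) ≤ upRate M i := by
    rw [upRate_of_ne_zero M hi]; exact_mod_cast Nat.one_le_iff_ne_zero.2 hi
  unfold Aq
  rw [if_neg (by omega), if_neg (by omega), if_pos rfl]
  split_ifs <;> first | omega | linarith

lemma abs_Qq_le (N : ℕ) {μ : ℝ} (hμ : 0 ≤ μ) (i' i : Fin (N + 1)) :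
    |Qq N μ i' i| ≤ 1 + μ := by
  unfold Qq
  split_ifs <;> rw [abs_le] <;> constructor <;> linarith

lemma Qq_of_val_eq_succ (N : ℕ) (μ : ℝ) {i i' : Fin (N + 1)} (h : i.val = i'.val + 1) :
    Qq N μ i i' = 1 := if_pos h

lemma Qq_self_neg (N : ℕ) {μ : ℝ} (hμ : 0 < μ) {i : Fin (N + 1)} (hi : 0 < i.val) :
    Qq N μ i i < 0 := by
  unfold Qq
  rw [if_neg (by omega), if_neg (by omega), if_pos rfl, if_pos hi]
  split_ifs <;> linarith

lemma Aq_mul_Qq_self_pos (N : ℕ) {M : ℕ} (hM : 0 < M) {i : Fin (N + 1)} (hi : 0 < i.val)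
    (j : Fin (M + 1)) : 0 < Aq M i.val j j * Qq N (μval M j.val) i i :=
  mul_pos_of_neg_of_neg ((Aq_self_le_neg_one hM hi.ne' j).trans_lt (by norm_num))
    (Qq_self_neg N (μval_pos M _) hi)

end Rates

section StationaryMeasure

lemma ηq_pos (N : ℕ) {μ : ℝ} (hμ : 0 < μ) : 0 < ηq N μ :=
  sum_pos (fun k _ => pow_pos (inv_pos.2 hμ) k) nonempty_range_add_one

lemma σq_pos {M : ℕ} (hM : 0 < M) (i : ℕ) : 0 < σq M i :=
  sum_pos (fun k _ => pow_pos (upRate_pos hM i) k) nonempty_range_add_one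

lemma gq_pos (N : ℕ) {M : ℕ} (hM : 0 < M) (p : Fin (N + 1) × Fin (M + 1)) : 0 < gq N M p :=
  mul_pos (div_pos (pow_pos (inv_pos.2 (μval_pos M _)) _) (ηq_pos N (μval_pos M _)))
    (div_pos (pow_pos (upRate_pos hM _) _) (σq_pos hM _))

lemma νq_nonneg (M i : ℕ) (j : Fin (M + 1)) : 0 ≤ νq M i j :=
  div_nonneg (pow_nonneg (upRate_nonneg M i) _)
    (sum_nonneg fun k _ => pow_nonneg (upRate_nonneg M i) k)

lemma mq_of_val_eq_succ (N : ℕ) (μ : ℝ) {i i' : Fin (N + 1)} (h : i.val = i'.val + 1) :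
    mq N μ i = μ⁻¹ * mq N μ i' := by
  rw [mq, mq, h, pow_succ]
  ring

lemma pow_le_σq (M : ℕ) {i : ℕ} (hi : i ≠ 0) : (i : ℝ) ^ M ≤ σq M i := by
  rw [σq, upRate_of_ne_zero M hi]
  exact single_le_sum (fun k _ => by positivity) (self_mem_range_succ M)

lemma σq_le_pow (M : ℕ) {i : ℕ} (hi : i ≠ 0) : σq M i ≤ (M + 1) * (i : ℝ) ^ M := by
  have hi1 : (1 : ℝ) ≤ i := by exact_mod_cast Nat.one_le_iff_ne_zero.2 hi
  rw [σq, upRate_of_ne_zero M hi]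
  calc ∑ k ∈ range (M + 1), (i : ℝ) ^ k
      ≤ ∑ _k ∈ range (M + 1), (i : ℝ) ^ M :=
        sum_le_sum fun k hk => pow_le_pow_right₀ hi1 (Nat.lt_succ_iff.1 (mem_range.1 hk))
    _ = (M + 1) * (i : ℝ) ^ M := by simp

lemma νq_le_inv_pow {M i : ℕ} (hi : i ≠ 0) {j : Fin (M + 1)} :
    νq M i j ≤ ((i : ℝ)⁻¹) ^ (M - j.val) := by
  have hi0 : (0 : ℝ) < i := by exact_mod_cast Nat.pos_of_ne_zero hi
  rw [νq, upRate_of_ne_zero M hi, inv_pow_sub₀ hi0.ne' (Nat.lt_succ_iff.1 j.isLt)]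
  calc (i : ℝ) ^ j.val / σq M i ≤ (i : ℝ) ^ j.val / (i : ℝ) ^ M := by
        gcongr; exact pow_le_σq M hi
    _ = _ := by ring

lemma inv_pow_le_νq {M i : ℕ} (hi : i ≠ 0) {j : Fin (M + 1)} :
    ((i : ℝ)⁻¹) ^ (M - j.val) ≤ (M + 1) * νq M i j := by
  have hi0 : (0 : ℝ) < i := by exact_mod_cast Nat.pos_of_ne_zero hi
  have hσ : 0 < σq M i := lt_of_lt_of_le (by positivity) (pow_le_σq M hi)
  rw [νq, upRate_of_ne_zero M hi, inv_pow_sub₀ hi0.ne' (Nat.lt_succ_iff.1 j.isLt)]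
  calc ((i : ℝ) ^ M)⁻¹ * (i : ℝ) ^ j.val
      = (M + 1) * ((i : ℝ) ^ j.val / ((M + 1) * (i : ℝ) ^ M)) := by field_simp
    _ ≤ (M + 1) * ((i : ℝ) ^ j.val / σq M i) := by
        gcongr; exact σq_le_pow M hi

lemma gq_le_of_val_eq_succ (N : ℕ) {M : ℕ} {i i' : Fin (N + 1)} (h : i.val = i'.val + 1)
    (hi' : i'.val ≠ 0) (j : Fin (M + 1)) :
    gq N M (i, j) ≤
      2 * (M + 1) * ((i'.val : ℝ) / i.val) ^ (M - j.val) * gq N M (i', j) := by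
  have hm : 0 ≤ mq N (μval M j.val) i' :=
    div_nonneg (by have := μval_pos M j.val; positivity) (ηq_pos N (μval_pos M _)).le
  have hν : νq M i.val j ≤ (M + 1) * ((i'.val : ℝ) / i.val) ^ (M - j.val) * νq M i'.val j :=
    calc νq M i.val j ≤ ((i.val : ℝ)⁻¹) ^ (M - j.val) := νq_le_inv_pow (by omega)
      _ = ((i'.val : ℝ) / i.val) ^ (M - j.val) * ((i'.val : ℝ)⁻¹) ^ (M - j.val) := by
        rw [← mul_pow]; congr 1; field_simp
      _ ≤ ((i'.val : ℝ) / i.val) ^ (M - j.val) * ((M + 1) * νq M i'.val j) := by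
        gcongr; exact inv_pow_le_νq hi'
      _ = _ := by ring
  have := νq_nonneg M i.val j
  have := νq_nonneg M i'.val j
  rw [gq, gq, mq_of_val_eq_succ N _ h]
  calc (μval M j.val)⁻¹ * mq N (μval M j.val) i' * νq M i.val j
      ≤ 2 * mq N (μval M j.val) i' *
          ((M + 1) * ((i'.val : ℝ) / i.val) ^ (M - j.val) * νq M i'.val j) := by
        gcongr
        exact inv_μval_le_two M j.val
    _ = _ := by ring

end StationaryMeasure

section Flows

def fluxIn (N M : ℕ) (p : Fin (N + 1) × Fin (M + 1)) : ℝ :=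
  ∑ s ∈ univ.erase p, |Aq M s.1.val p.2 s.2 * Qq N (μval M p.2.val) p.1 s.1| * gq N M s

def exitRate (N M : ℕ) (p : Fin (N + 1) × Fin (M + 1)) : ℝ :=
  ∑ s ∈ univ.erase p, |Aq M p.1.val s.2 p.2 * Qq N (μval M s.2.val) s.1 p.1|

lemma card_adjacent_le_three {M : ℕ} (j : Fin (M + 1)) :
    #{j' : Fin (M + 1) | j'.val ≤ j.val + 1 ∧ j.val ≤ j'.val + 1} ≤ 3 := by
  calc #{j' : Fin (M + 1) | j'.val ≤ j.val + 1 ∧ j.val ≤ j'.val + 1}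
      ≤ #(Icc (j.val - 1) (j.val + 1)) := by
        refine card_le_card_of_injOn Fin.val (fun x hx => ?_) Fin.val_injective.injOn
        simp only [coe_filter, mem_univ, true_and, Set.mem_ofPred_eq] at hx
        simp only [coe_Icc, Set.mem_Icc]
        omega
    _ ≤ 3 := by rw [Nat.card_Icc]; omega

lemma sum_abs_Aq_le (M i : ℕ) (j : Fin (M + 1)) :
    ∑ j', |Aq M i j' j| ≤ 3 * (upRate M i + 1) := by
  calc ∑ j', |Aq M i j' j|
      ≤ ∑ j' : Fin (M + 1),
          if j'.val ≤ j.val + 1 ∧ j.val ≤ j'.val + 1 then upRate M i + 1 else 0 := by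
        refine sum_le_sum fun j' _ => ?_
        split_ifs with h
        · exact abs_Aq_le M i j' j
        · rw [Aq_eq_zero_of_not_adjacent M i h, abs_zero]
    _ = #{j' : Fin (M + 1) | j'.val ≤ j.val + 1 ∧ j.val ≤ j'.val + 1} * (upRate M i + 1) := by
        rw [← sum_filter, sum_const, nsmul_eq_mul]
    _ ≤ 3 * (upRate M i + 1) := by
        have := upRate_nonneg M i
        gcongr
        exact_mod_cast card_adjacent_le_three j

lemma exitRate_nonneg (N M : ℕ) (p : Fin (N + 1) × Fin (M + 1)) : 0 ≤ exitRate N M p :=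
  sum_nonneg fun _ _ => abs_nonneg _

lemma exitRate_le (N M : ℕ) {p : Fin (N + 1) × Fin (M + 1)} (hp : p.1.val ≠ 0) :
    exitRate N M p ≤ 15 / 2 * (N + 1) ^ 2 := by
  have hQ : ∀ j' : Fin (M + 1), ∑ i', |Qq N (μval M j'.val) i' p.1| ≤ 5 / 2 * (N + 1) := by
    intro j'
    calc ∑ i', |Qq N (μval M j'.val) i' p.1| ≤ ∑ _i' : Fin (N + 1), (5 / 2 : ℝ) := by
          refine sum_le_sum fun i' _ => (abs_Qq_le N (μval_pos M _).le i' p.1).trans ?_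
          linarith [μval_le_three_halves (Nat.lt_succ_iff.1 j'.isLt)]
      _ = 5 / 2 * (N + 1) := by simp; ring
  have hA : upRate M p.1.val ≤ N := by
    rw [upRate_of_ne_zero M hp]
    exact_mod_cast Nat.lt_succ_iff.1 p.1.isLt
  calc exitRate N M p
      ≤ ∑ s : Fin (N + 1) × Fin (M + 1),
          |Aq M p.1.val s.2 p.2 * Qq N (μval M s.2.val) s.1 p.1| :=
        sum_le_sum_of_subset_of_nonneg (erase_subset _ _) fun _ _ _ => abs_nonneg _
    _ = ∑ j', |Aq M p.1.val j' p.2| * ∑ i', |Qq N (μval M j'.val) i' p.1| := by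
        rw [Fintype.sum_prod_type_right]
        simp only [abs_mul, mul_sum]
    _ ≤ (∑ j', |Aq M p.1.val j' p.2|) * (5 / 2 * (N + 1)) := by
        rw [sum_mul]
        exact sum_le_sum fun j' _ => mul_le_mul_of_nonneg_left (hQ j') (abs_nonneg _)
    _ ≤ 3 * (N + 1) * (5 / 2 * (N + 1)) := by
        gcongr
        exact (sum_abs_Aq_le M _ _).trans (by linarith)
    _ = 15 / 2 * (N + 1) ^ 2 := by ring

lemma gq_le_fluxIn (N : ℕ) {M : ℕ} (hM : 0 < M) {i i' : Fin (N + 1)} (h : i.val = i'.val + 1)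
    (hi' : i'.val ≠ 0) (j : Fin (M + 1)) : gq N M (i', j) ≤ fluxIn N M (i, j) := by
  have hmem : (i', j) ∈ univ.erase (i, j) :=
    mem_erase.2 ⟨fun he => by simp only [Prod.mk.injEq] at he; omega, mem_univ _⟩
  calc gq N M (i', j)
      ≤ |Aq M i'.val j j * Qq N (μval M j.val) i i'| * gq N M (i', j) := by
        rw [Qq_of_val_eq_succ N _ h, mul_one]
        refine le_mul_of_one_le_left (gq_pos N hM _).le ?_
        have := Aq_self_le_neg_one hM hi' j
        rw [abs_of_neg (by linarith)]
        linarith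
    _ ≤ fluxIn N M (i, j) :=
        single_le_sum (f := fun s => |Aq M s.1.val j s.2 * Qq N (μval M j.val) i s.1| * gq N M s)
          (fun s _ => mul_nonneg (abs_nonneg _) (gq_pos N hM s).le) hmem

lemma τq_eq_of_exitRate_mul_le {N M : ℕ} {p : Fin (N + 1) × Fin (M + 1)}
    (hD : 0 < Aq M p.1.val p.2 p.2 * Qq N (μval M p.2.val) p.1 p.1) (hg : 0 < gq N M p)
    (h : exitRate N M p * gq N M p ≤ fluxIn N M p) :
    τq N M p =
      fluxIn N M p / (Aq M p.1.val p.2 p.2 * Qq N (μval M p.2.val) p.1 p.1 * gq N M p) := by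
  refine max_eq_left ?_
  change exitRate N M p / _ ≤ fluxIn N M p / _
  rw [div_le_div_iff₀ hD (mul_pos hD hg)]
  calc exitRate N M p * (_ * gq N M p) = exitRate N M p * gq N M p * _ := by ring
    _ ≤ _ := mul_le_mul_of_nonneg_right h hD.le

lemma exitRate_mul_gq_le_fluxIn (N : ℕ) {M : ℕ} (hM : 0 < M) {i i' : Fin (N + 1)}
    (h : i.val = i'.val + 1) (hi' : i'.val ≠ 0) (j : Fin (M + 1)) {K : ℝ}
    (hK : exitRate N M (i, j) ≤ K)
    (hdecay : 2 * K * (M + 1) * ((i'.val : ℝ) / i.val) ^ (M - j.val) ≤ 1) :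
    exitRate N M (i, j) * gq N M (i, j) ≤ fluxIn N M (i, j) := by
  have hK0 : 0 ≤ K := (exitRate_nonneg N M _).trans hK
  calc exitRate N M (i, j) * gq N M (i, j) ≤ K * gq N M (i, j) :=
        mul_le_mul_of_nonneg_right hK (gq_pos N hM _).le
    _ ≤ K * (2 * (M + 1) * ((i'.val : ℝ) / i.val) ^ (M - j.val) * gq N M (i', j)) := by
        gcongr; exact gq_le_of_val_eq_succ N h hi' j
    _ = 2 * K * (M + 1) * ((i'.val : ℝ) / i.val) ^ (M - j.val) * gq N M (i', j) := by ring
    _ ≤ gq N M (i', j) := mul_le_of_le_one_left (gq_pos N hM _).le hdecay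
    _ ≤ fluxIn N M (i, j) := gq_le_fluxIn N hM h hi' j

end Flows

lemma div_add_one_le_div_add_one {a b : ℝ} (ha : 0 ≤ a) (hab : a ≤ b) :
    a / (a + 1) ≤ b / (b + 1) := by
  rw [div_le_div_iff₀ (by positivity) (by linarith)]
  linarith

lemma exists_forall_mul_pow_le_one {c q : ℝ} (hc : 0 < c) (hq0 : 0 ≤ q) (hq1 : q < 1)
    {C : ℝ} (hC : 0 ≤ C) :
    ∃ M₀ : ℕ, ∀ M m : ℕ, M₀ ≤ M → c * M ≤ m → C * (M + 1) * q ^ m ≤ 1 := by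
  have hlim : Tendsto (fun m : ℕ => C / c * (m * q ^ m) + C * q ^ m) atTop (𝓝 0) := by
    simpa using ((tendsto_self_mul_const_pow_of_lt_one hq0 hq1).const_mul (C / c)).add
      ((tendsto_pow_atTop_nhds_zero_of_lt_one hq0 hq1).const_mul C)
  obtain ⟨m₀, hm₀⟩ := eventually_atTop.1 (hlim.eventually (ge_mem_nhds one_pos))
  refine ⟨⌈m₀ / c⌉₊, fun M m hM hm => ?_⟩
  have hMm : (M : ℝ) ≤ m / c := by rw [le_div_iff₀ hc]; linarith
  have hm₀m : m₀ ≤ m := by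
    have : (m₀ : ℝ) / c ≤ m / c :=
      (Nat.le_ceil _).trans ((Nat.cast_le.2 hM).trans hMm)
    exact_mod_cast (div_le_div_iff_of_pos_right hc).1 this
  calc C * (M + 1) * q ^ m ≤ C * (m / c + 1) * q ^ m := by gcongr
    _ = C / c * (m * q ^ m) + C * q ^ m := by ring
    _ ≤ 1 := hm₀ m hm₀m

theorem stmt13_general (N : ℕ) (ε' : ℝ) (hε'1 : ε' < 1) :
    ∃ M₀ : ℕ, ∀ M : ℕ, M₀ ≤ M →
      ∀ (i : Fin (N + 1)) (j : Fin (M + 1)), 2 ≤ i.val → (j.val : ℝ) ≤ ε' * (M : ℝ) →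
        (∑ s ∈ Finset.univ.erase (i, j),
            |Aq M s.1.val j s.2 * Qq N (μval M j.val) i s.1| * gq N M s ≥
          ∑ s ∈ Finset.univ.erase (i, j),
            |Aq M i.val s.2 j * Qq N (μval M s.2.val) s.1 i| * gq N M (i, j)) ∧
        τq N M (i, j) =
          (∑ s ∈ Finset.univ.erase (i, j),
              |Aq M s.1.val j s.2 * Qq N (μval M j.val) i s.1| * gq N M s) /
            (Aq M i.val j j * Qq N (μval M j.val) i i * gq N M (i, j)) := by
  obtain ⟨M₀, hM₀⟩ := exists_forall_mul_pow_le_one (sub_pos.2 hε'1) (q := N / (N + 1))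
    (by positivity) (by rw [div_lt_one (by positivity)]; linarith)
    (C := 2 * (15 / 2 * (N + 1) ^ 2)) (by positivity)
  refine ⟨max M₀ 1, fun M hM i j hi hj => ?_⟩
  have hM0 : 0 < M := by omega
  obtain ⟨i', hsucc⟩ : ∃ i' : Fin (N + 1), i.val = i'.val + 1 :=
    ⟨⟨i.val - 1, by omega⟩, by dsimp only; omega⟩
  have hratio : (i'.val : ℝ) / i.val ≤ N / (N + 1) := by
    rw [hsucc, Nat.cast_succ]
    exact div_add_one_le_div_add_one (Nat.cast_nonneg _) (by have := i.isLt; norm_cast; omega)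
  have hdecay :
      2 * (15 / 2 * (N + 1) ^ 2) * (M + 1) * ((i'.val : ℝ) / i.val) ^ (M - j.val) ≤ 1 :=
    calc _ ≤ 2 * (15 / 2 * (N + 1) ^ 2) * (M + 1) * ((N : ℝ) / (N + 1)) ^ (M - j.val) := by
          gcongr
      _ ≤ 1 := hM₀ M (M - j.val) (le_of_max_le_left hM) (by
          rw [Nat.cast_sub (Nat.lt_succ_iff.1 j.isLt)]; linarith)
  have hflow := exitRate_mul_gq_le_fluxIn N hM0 hsucc (by omega) j
    (exitRate_le N M (p := (i, j)) (show i.val ≠ 0 by omega)) hdecay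
  exact ⟨by rw [← sum_mul]; exact hflow,
    τq_eq_of_exitRate_mul_le (Aq_mul_Qq_self_pos N hM0 (show 0 < i.val by omega) j)
      (gq_pos N hM0 _) hflow⟩

theorem stmt13 (N : ℕ) (hN : 2 ≤ N) (ε' : ℝ) (hε'0 : 0 < ε') (hε'1 : ε' < 1) :
    ∃ M₀ : ℕ, ∀ M : ℕ, M₀ ≤ M →
      ∀ (i : Fin (N + 1)) (j : Fin (M + 1)), 2 ≤ i.val → (j.val : ℝ) ≤ ε' * (M : ℝ) →
        (∑ s ∈ Finset.univ.erase (i, j),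
            |Aq M s.1.val j s.2 * Qq N (μval M j.val) i s.1| * gq N M s ≥
          ∑ s ∈ Finset.univ.erase (i, j),
            |Aq M i.val s.2 j * Qq N (μval M s.2.val) s.1 i| * gq N M (i, j)) ∧
        τq N M (i, j) =
          (∑ s ∈ Finset.univ.erase (i, j),
              |Aq M s.1.val j s.2 * Qq N (μval M j.val) i s.1| * gq N M s) /
            (Aq M i.val j j * Qq N (μval M j.val) i i * gq N M (i, j)) :=
  stmt13_general N ε' hε'1
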